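/- If z is an element of the degree-2 part H² of S_n with z² = 0 in S_n, then the image of z under the reduction map S_n → S_n ⊗ ℤ/2 is either 0 or equal to the image of x_1. -/

import Mathlib

open MvPolynomial

noncomputable section

/-- The defining relations x_1², x_j² − x_1 x_j (j ≥ 2) of S_n. -/
def srel (n : ℕ) (j : Fin n) : MvPolynomial (Fin n) ℤ :=
  X j ^ 2 -
    (if j.val = 0 then 0
      else X (⟨0, Nat.lt_of_le_of_lt (Nat.zero_le _) j.isLt⟩ : Fin n)) * X j

/-- S_n = ℤ[x_1,…,x_n]/(x_1², x_j² − x_1 x_j : j = 2,…,n). -/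
abbrev SRing (n : ℕ) : Type :=
  MvPolynomial (Fin n) ℤ ⧸ Ideal.span (Set.range (srel n))

/-- The image x_i of X i in S_n. -/
def sx (n : ℕ) (i : Fin n) : SRing n :=
  Ideal.Quotient.mk _ (X i)

/-- The reduction map S_n → S_n ⊗ ℤ/2 = S_n/2S_n. -/
def mod2 (n : ℕ) : SRing n →+* SRing n ⧸ (Ideal.span ({2} : Set (SRing n))) :=
  Ideal.Quotient.mk _

/-!
Write `z = ∑ cᵢ xᵢ` (the index `0 : Fin n` stands for `x₁`). For `j ≠ 1`, the assignment
`x₁ ↦ 2δ`, `x_j ↦ δ + ε` and `x_i ↦ 0` otherwise respects the relations, so it defines a ring map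
`S_n → ℤ[δ, ε]/(δ², ε²)`; it sends `z²` to `2 c_j (2 c₁ + c_j) δε`. Since `δε` is not torsion,
`c_j (2 c₁ + c_j) = 0`, so `c_j` is even and `z ≡ c₁ x₁` modulo 2.

The test ring `ℤ[δ, ε]/(δ², ε²)` is `DualNumber (DualNumber ℤ)`, with `δ = inl ε`.
-/

theorem Ideal.Quotient.mk_span_two_zsmul_eq {A : Type*} [CommRing A] {k l : ℤ}
    (h : k ≡ l [ZMOD 2]) (x : A) :
    Ideal.Quotient.mk (Ideal.span {(2 : A)}) (k • x) = Ideal.Quotient.mk _ (l • x) := by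
  obtain ⟨m, hm⟩ := h.symm.dvd
  refine Ideal.Quotient.eq.mpr (Ideal.mem_span_singleton.mpr ⟨m • x, ?_⟩)
  rw [← sub_smul, hm, mul_smul, two_zsmul, two_mul]

open TrivSqZeroExt DualNumber in
theorem eq_zero_of_zsmul_inl_eps_mul_eps_eq_zero {k : ℤ}
    (h : k • (inl ε * ε : DualNumber (DualNumber ℤ)) = 0) : k = 0 := by
  simpa using congrArg (fun x ↦ x.snd.snd) h

namespace SRing

variable {n : ℕ} [NeZero n] {R : Type*} [CommRing R]

theorem aeval_srel_eq_zero {t : Fin n → R} (h0 : t 0 ^ 2 = 0)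
    (h : ∀ j ≠ 0, t j ^ 2 = t 0 * t j) (j : Fin n) : aeval t (srel n j) = 0 := by
  have hfirst : (⟨0, Nat.lt_of_le_of_lt (Nat.zero_le _) j.isLt⟩ : Fin n) = 0 := Fin.ext (by simp)
  by_cases hj : j = 0
  · subst hj
    simpa [srel] using h0
  · simpa [srel, hfirst, Fin.val_eq_zero_iff, hj, sub_eq_zero] using h j hj

def lift (t : Fin n → R) (h0 : t 0 ^ 2 = 0) (h : ∀ j ≠ 0, t j ^ 2 = t 0 * t j) :
    SRing n →+* R :=
  Ideal.Quotient.lift _ (aeval t).toRingHom fun _ hp ↦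
    (Ideal.span_le (I := RingHom.ker (aeval t).toRingHom)).mpr
      (Set.range_subset_iff.mpr (aeval_srel_eq_zero h0 h)) hp

@[simp]
theorem lift_sx (t : Fin n → R) (h0 : t 0 ^ 2 = 0) (h : ∀ j ≠ 0, t j ^ 2 = t 0 * t j)
    (i : Fin n) : lift t h0 h (sx n i) = t i := by
  simp [lift, sx]

theorem zsmul_mul_eq_zero_of_sq_eq_zero {δ ε : R} (hδ : δ ^ 2 = 0) (hε : ε ^ 2 = 0)
    {c : Fin n → ℤ} (hsq : (∑ i, c i • sx n i) ^ 2 = 0) {j : Fin n} (hj : j ≠ 0) :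
    (2 * c j * (2 * c 0 + c j)) • (δ * ε) = 0 := by
  let t : Fin n → R := Pi.single 0 (2 * δ) + Pi.single j (δ + ε)
  have ht0 : t 0 = 2 * δ := by simp [t, hj.symm]
  have htj : t j = δ + ε := by simp [t, hj]
  have h0 : t 0 ^ 2 = 0 := by rw [ht0]; linear_combination 4 * hδ
  have h : ∀ i ≠ 0, t i ^ 2 = t 0 * t i := by
    intro i hi
    by_cases hij : i = j
    · subst hij; rw [htj, ht0]; linear_combination hε - hδ
    · simp [t, hi, hij]
  have himage : lift t h0 h (∑ i, c i • sx n i) = c 0 • (2 * δ) + c j • (δ + ε) := by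
    simp [t, Pi.single_apply, mul_add, Finset.sum_add_distrib]
  have hsq' := congrArg (lift t h0 h) hsq
  rw [map_pow, himage, map_zero] at hsq'
  simp only [zsmul_eq_mul] at hsq' ⊢
  push_cast
  linear_combination hsq' - (2 * (c 0 : R) + c j) ^ 2 * hδ - (c j : R) ^ 2 * hε

open TrivSqZeroExt DualNumber in
theorem two_dvd_of_sq_eq_zero {c : Fin n → ℤ} (hsq : (∑ i, c i • sx n i) ^ 2 = 0) {j : Fin n}
    (hj : j ≠ 0) : 2 ∣ c j := by
  have hδ : (inl ε : DualNumber (DualNumber ℤ)) ^ 2 = 0 := by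
    rw [inl_pow, pow_two, eps_mul_eps, inl_zero]
  have hε : (ε : DualNumber (DualNumber ℤ)) ^ 2 = 0 := by rw [pow_two, eps_mul_eps]
  have hprod : c j * (2 * c 0 + c j) = 0 := by
    have h := eq_zero_of_zsmul_inl_eps_mul_eps_eq_zero
      (zsmul_mul_eq_zero_of_sq_eq_zero hδ hε hsq hj)
    rw [mul_assoc] at h
    exact (mul_eq_zero.mp h).resolve_left two_ne_zero
  rcases mul_eq_zero.mp hprod with h | h
  · exact h ▸ dvd_zero 2
  · exact ⟨-c 0, by omega⟩

theorem mod2_sum_zsmul_sx {c : Fin n → ℤ} (heven : ∀ j ≠ 0, 2 ∣ c j) :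
    mod2 n (∑ i, c i • sx n i) = mod2 n ((c 0 % 2) • sx n 0) := by
  rw [map_sum, Finset.sum_eq_single 0 (fun j _ hj ↦ ?_) (by simp)]
  · exact Ideal.Quotient.mk_span_two_zsmul_eq (Int.mod_modEq _ _).symm _
  · rw [mod2, Ideal.Quotient.mk_span_two_zsmul_eq (Int.modEq_zero_iff_dvd.mpr (heven j hj)),
      zero_smul, map_zero]

end SRing

theorem mod2_of_square_zero (n : ℕ) [NeZero n] (c : Fin n → ℤ)
    (z : SRing n) (hz : z = ∑ i, c i • sx n i) (hsq : z ^ 2 = 0) :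
    mod2 n z = 0 ∨ mod2 n z = mod2 n (sx n 0) := by
  subst hz
  rw [SRing.mod2_sum_zsmul_sx fun j hj ↦ SRing.two_dvd_of_sq_eq_zero hsq hj]
  rcases Int.emod_two_eq_zero_or_one (c 0) with h | h <;> simp [h]

end
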